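/- arXiv:1309.4927 — 6 statements merged into one kernel-verified Lean document; each statement's English description precedes it below -/
import Mathlib

section
/- The Identity Rule is sound for inclusion atoms: if a team X satisfies ab ⊆ cc (i.e., for every s ∈ X there is s' ∈ X with s(a) = s'(c) and s(b) = s'(c)), then every s ∈ X satisfies s(a) = s(b); consequently, if X also satisfies an inclusion atom φ, then X satisfies the atom φ' obtained from φ by replacing occurrences of the variable a with b. -/
/-
The atom `ab ⊆ cc` forces every assignment of the team to give `a` and `b` the same value,
namely the value some other assignment gives `c`. Hence, on the team, the variables `a` and `b`
are interchangeable, and an inclusion atom only sees the values of its variables on the team.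
-/

/-- A team is a set of assignments; the inclusion atom `x ⊆ y` holds in team `X`
iff for every `s ∈ X` there is `s' ∈ X` with `s(x) = s'(y)` componentwise. -/
def InclAtom {M Var : Type*} {n : ℕ} (X : Set (Var → M)) (x y : Fin n → Var) : Prop :=
  ∀ s ∈ X, ∃ s' ∈ X, ∀ i, s (x i) = s' (y i)

namespace InclAtom

variable {M Var : Type*} {X : Set (Var → M)}

theorem eq_of_pair_subset_diag {a b c : Var} (h : InclAtom X ![a, b] ![c, c]) :
    ∀ s ∈ X, s a = s b := by
  intro s hs
  obtain ⟨s', -, hs'⟩ := h s hs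
  simpa using (hs' 0).trans (hs' 1).symm

theorem of_apply_eq {n : ℕ} {u w u' w' : Fin n → Var}
    (hu : ∀ s ∈ X, ∀ i, s (u' i) = s (u i)) (hw : ∀ s ∈ X, ∀ i, s (w' i) = s (w i))
    (h : InclAtom X u w) : InclAtom X u' w' := by
  intro s hs
  obtain ⟨s', hs'X, hs'⟩ := h s hs
  exact ⟨s', hs'X, fun i => by rw [hu s hs, hw s' hs'X, hs']⟩

end InclAtom

theorem apply_eq_of_subst {M Var : Type*} {X : Set (Var → M)} {a b v v' : Var}
    (hab : ∀ s ∈ X, s a = s b) (hv : v' = v ∨ (v = a ∧ v' = b)) :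
    ∀ s ∈ X, s v' = s v := by
  rcases hv with rfl | ⟨rfl, rfl⟩
  · exact fun _ _ => rfl
  · exact fun s hs => (hab s hs).symm

/-- Identity Rule: if X satisfies ab ⊆ cc then every s ∈ X has s(a) = s(b), and
any inclusion atom remains satisfied after replacing any occurrences of a by b. -/
theorem identity_rule {M Var : Type*} (X : Set (Var → M)) (a b c : Var)
    (h : InclAtom X ![a, b] ![c, c]) :
    (∀ s ∈ X, s a = s b) ∧
    (∀ {n : ℕ} (u w u' w' : Fin n → Var),
      (∀ i, u' i = u i ∨ (u i = a ∧ u' i = b)) →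
      (∀ i, w' i = w i ∨ (w i = a ∧ w' i = b)) →
      InclAtom X u w → InclAtom X u' w') := by
  have hab := h.eq_of_pair_subset_diag
  refine ⟨hab, fun u w u' w' hu hw => InclAtom.of_apply_eq ?_ ?_⟩
  · exact fun s hs i => apply_eq_of_subst hab (hu i) s hs
  · exact fun s hs i => apply_eq_of_subst hab (hw i) s hs
end

section
/- The Chase Rule is sound: if a team X satisfies the conditional independence atom y⃗ ⊥_{x⃗} z⃗ and the inclusion atoms a⃗b⃗ ⊆ x⃗y⃗ and a⃗c⃗ ⊆ x⃗z⃗, then X satisfies the inclusion atom a⃗b⃗c⃗ ⊆ x⃗y⃗z⃗. -/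
/-- The conditional independence atom `y ⊥_x z` holds in team `X` iff for all
`s, s' ∈ X` agreeing on `x` there is `s'' ∈ X` with `s''(x) = s(x)`,
`s''(y) = s(y)` and `s''(z) = s'(z)`. -/
def IndepAtom {M Var : Type*} {k m n : ℕ} (X : Set (Var → M)) (x : Fin k → Var)
    (y : Fin m → Var) (z : Fin n → Var) : Prop :=
  ∀ s ∈ X, ∀ s' ∈ X, (∀ i, s (x i) = s' (x i)) →
    ∃ s'' ∈ X, (∀ i, s'' (x i) = s (x i)) ∧ (∀ i, s'' (y i) = s (y i)) ∧
      (∀ i, s'' (z i) = s' (z i))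

/-! For `s ∈ X`, the inclusion atoms give `s₁, s₂ ∈ X` copying `s(a⃗b⃗)` onto `x⃗y⃗` and
`s(a⃗c⃗)` onto `x⃗z⃗`. Both agree with `s(a⃗)` on `x⃗`, so the independence atom merges them
into one `t ∈ X` with `t(x⃗y⃗z⃗) = s(a⃗b⃗c⃗)`. -/

theorem forall_apply_append_eq_iff {M Var : Type*} {k m : ℕ} (s t : Var → M)
    (u x : Fin k → Var) (v y : Fin m → Var) :
    (∀ i, s (Fin.append u v i) = t (Fin.append x y i)) ↔
      (∀ i, s (u i) = t (x i)) ∧ ∀ i, s (v i) = t (y i) := by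
  simp only [Fin.forall_fin_add, Fin.append_left, Fin.append_right]

/-- The Chase Rule is sound: from y⃗ ⊥_{x⃗} z⃗, a⃗b⃗ ⊆ x⃗y⃗ and a⃗c⃗ ⊆ x⃗z⃗
one obtains a⃗b⃗c⃗ ⊆ x⃗y⃗z⃗. -/
theorem chase_rule {M Var : Type*} {k m n : ℕ} (X : Set (Var → M))
    (x a : Fin k → Var) (y b : Fin m → Var) (z c : Fin n → Var)
    (hind : IndepAtom X x y z)
    (hab : InclAtom X (Fin.append a b) (Fin.append x y))
    (hac : InclAtom X (Fin.append a c) (Fin.append x z)) :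
    InclAtom X (Fin.append (Fin.append a b) c) (Fin.append (Fin.append x y) z) := by
  intro s hs
  obtain ⟨s₁, hs₁, hab₁⟩ := hab s hs
  obtain ⟨s₂, hs₂, hac₂⟩ := hac s hs
  rw [forall_apply_append_eq_iff] at hab₁ hac₂
  obtain ⟨ha₁, hb₁⟩ := hab₁
  obtain ⟨ha₂, hc₂⟩ := hac₂
  obtain ⟨t, ht, htx, hty, htz⟩ :=
    hind s₁ hs₁ s₂ hs₂ fun i => (ha₁ i).symm.trans (ha₂ i)
  refine ⟨t, ht, ?_⟩
  simp only [forall_apply_append_eq_iff]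
  exact ⟨⟨fun i => (ha₁ i).trans (htx i).symm, fun i => (hb₁ i).trans (hty i).symm⟩,
    fun i => (hc₂ i).trans (htz i).symm⟩
end

section
/- The Final Rule is sound: if a team X satisfies the inclusion atom a⃗c⃗ ⊆ a⃗x⃗, the independence atom b⃗ ⊥_{a⃗} x⃗, and the inclusion atom a⃗b⃗x⃗ ⊆ a⃗b⃗c⃗, then X satisfies the independence atom b⃗ ⊥_{a⃗} c⃗. -/
theorem inclAtom_append_iff {M Var : Type*} {k n : ℕ} (X : Set (Var → M))
    (u u' : Fin k → Var) (v v' : Fin n → Var) :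
    InclAtom X (Fin.append u v) (Fin.append u' v') ↔
      ∀ s ∈ X, ∃ s' ∈ X, (∀ i, s (u i) = s' (u' i)) ∧ ∀ i, s (v i) = s' (v' i) := by
  simp only [InclAtom, Fin.forall_fin_add, Fin.append_left, Fin.append_right]

/-- The Final Rule is sound: from a⃗c⃗ ⊆ a⃗x⃗, b⃗ ⊥_{a⃗} x⃗ and
a⃗b⃗x⃗ ⊆ a⃗b⃗c⃗ one obtains b⃗ ⊥_{a⃗} c⃗. -/
theorem final_rule {M Var : Type*} {k m n : ℕ} (X : Set (Var → M))
    (a : Fin k → Var) (b : Fin m → Var) (c x : Fin n → Var)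
    (h1 : InclAtom X (Fin.append a c) (Fin.append a x))
    (h2 : IndepAtom X a b x)
    (h3 : InclAtom X (Fin.append (Fin.append a b) x) (Fin.append (Fin.append a b) c)) :
    IndepAtom X a b c := by
  rw [inclAtom_append_iff] at h1
  simp only [inclAtom_append_iff, Fin.forall_fin_add, Fin.append_left, Fin.append_right] at h3
  intro s hs s' hs' hss'
  obtain ⟨t, ht, hs't_a, hs't_cx⟩ := h1 s' hs'
  obtain ⟨u, hu, hus_a, hus_b, hut_x⟩ := h2 s hs t ht fun i => (hss' i).trans (hs't_a i)
  obtain ⟨v, hv, ⟨huv_a, huv_b⟩, huv_xc⟩ := h3 u hu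
  exact ⟨v, hv, fun i => (huv_a i).symm.trans (hus_a i), fun i => (huv_b i).symm.trans (hus_b i),
    fun i => (huv_xc i).symm.trans ((hut_x i).trans (hs't_cx i).symm)⟩
end

section
/- The Inclusion Introduction rule is realizable by extending a team: if a team X over domain V satisfies a⃗ ⊆ b⃗, c is a variable in V, and x is a fresh variable not in V, then there exists a team X' with the same restriction to V as X (obtained by assigning to each s ∈ X a value for x) such that X' satisfies a⃗x ⊆ b⃗c. -/
namespace InclAtom

variable {M Var : Type*} {n : ℕ}

theorem snoc_iff (X : Set (Var → M)) (x y : Fin n → Var) (u v : Var) :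
    InclAtom X (Fin.snoc x u) (Fin.snoc y v) ↔
      ∀ s ∈ X, ∃ s' ∈ X, (∀ i, s (x i) = s' (y i)) ∧ s u = s' v := by
  simp only [InclAtom, Fin.forall_fin_succ', Fin.snoc_castSucc, Fin.snoc_last]

theorem exists_witness_fun {X : Set (Var → M)} {x y : Fin n → Var} (h : InclAtom X x y) :
    ∃ w : (Var → M) → Var → M, ∀ s ∈ X, w s ∈ X ∧ ∀ i, s (x i) = w s (y i) := by
  classical
  refine ⟨fun s => if hs : s ∈ X then (h s hs).choose else s, fun s hs => ?_⟩
  simpa only [dif_pos hs] using (h s hs).choose_spec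

end InclAtom

/-- The team `X[F/x]` over `V ⊕ Unit`, the fresh variable `x` being `Sum.inr ()`. -/
def extendTeam {M V : Type*} (X : Set (V → M)) (F : (V → M) → M) : Set ((V ⊕ Unit) → M) :=
  (fun s => Sum.elim s fun _ => F s) '' X

theorem restrict_extendTeam {M V : Type*} (X : Set (V → M)) (F : (V → M) → M) :
    (fun t : (V ⊕ Unit) → M => t ∘ Sum.inl) '' extendTeam X F = X := by
  simp only [extendTeam, Set.image_image, Sum.elim_comp_inl, Set.image_id']

theorem inclAtom_extendTeam_snoc {M V : Type*} {n : ℕ} {X : Set (V → M)} {a b : Fin n → V}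
    (c : V) {w : (V → M) → V → M} (hw : ∀ s ∈ X, w s ∈ X ∧ ∀ i, s (a i) = w s (b i)) :
    InclAtom (extendTeam X fun s => w s c) (Fin.snoc (Sum.inl ∘ a) (Sum.inr ()))
      (Fin.snoc (Sum.inl ∘ b) (Sum.inl c)) := by
  rw [InclAtom.snoc_iff]
  rintro _ ⟨s, hs, rfl⟩
  exact ⟨_, ⟨w s, (hw s hs).1, rfl⟩, (hw s hs).2, rfl⟩

/-- Inclusion Introduction is realizable: if X over variables V satisfies
a⃗ ⊆ b⃗ and c ∈ V, then extending each assignment of X with a value for a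
fresh variable x (modeled by the summand Unit) yields a team X' over
V ⊕ Unit whose restriction to V is X and which satisfies a⃗x ⊆ b⃗c. -/
theorem inclusion_introduction {M V : Type*} {n : ℕ} (X : Set (V → M))
    (a b : Fin n → V) (c : V) (h : InclAtom X a b) :
    ∃ X' : Set ((V ⊕ Unit) → M),
      ((fun t : (V ⊕ Unit) → M => t ∘ Sum.inl) '' X' = X) ∧
      InclAtom X' (Fin.snoc (Sum.inl ∘ a) (Sum.inr ()))
        (Fin.snoc (Sum.inl ∘ b) (Sum.inl c)) := by
  obtain ⟨w, hw⟩ := h.exists_witness_fun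
  exact ⟨extendTeam X fun s => w s c, restrict_extendTeam X _, inclAtom_extendTeam_snoc c hw⟩
end

section
/- Decomposition of conditional independence atoms with overlapping tuples: a team X satisfies the atom y⃗ ⊥_{x⃗} z⃗ if and only if X satisfies y⃗* ⊥_{x⃗} z⃗* and the dependence atom =(x⃗, u) for every variable u ∈ u⃗, where y⃗* lists the variables of y⃗ not in x⃗ ∪ z⃗, z⃗* lists the variables of z⃗ not in x⃗ ∪ y⃗, and u⃗ lists the variables of (y⃗ ∩ z⃗) \ x⃗. -/
/-- The dependence atom =(x⃗, u). -/
def DepAtom {M Var : Type*} {n : ℕ} (X : Set (Var → M)) (x : Fin n → Var) (u : Var) : Prop :=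
  ∀ s ∈ X, ∀ s' ∈ X, (∀ i, s (x i) = s' (x i)) → s u = s' u

/-- Decomposition of conditional independence atoms with overlapping tuples:
X ⊨ y⃗ ⊥_{x⃗} z⃗ iff X ⊨ y⃗* ⊥_{x⃗} z⃗* and X ⊨ =(x⃗, u) for each u ∈ u⃗,
where y⃗* lists the variables of y⃗ \ (x⃗ ∪ z⃗), z⃗* lists those of
z⃗ \ (x⃗ ∪ y⃗), and u⃗ lists those of (y⃗ ∩ z⃗) \ x⃗. -/
theorem indep_decomposition {M Var : Type*} {k m n m' n' p : ℕ}
    (X : Set (Var → M)) (x : Fin k → Var) (y : Fin m → Var) (z : Fin n → Var)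
    (ystar : Fin m' → Var) (zstar : Fin n' → Var) (u : Fin p → Var)
    (hy : Set.range ystar = Set.range y \ (Set.range x ∪ Set.range z))
    (hz : Set.range zstar = Set.range z \ (Set.range x ∪ Set.range y))
    (hu : Set.range u = (Set.range y ∩ Set.range z) \ Set.range x) :
    IndepAtom X x y z ↔ (IndepAtom X x ystar zstar ∧ ∀ i, DepAtom X x (u i)) := by
  constructor
  · intro h
    constructor
    · intro s hs s' hs' hxx
      obtain ⟨s'', hs'', hsx, hsy, hsz⟩ := h s hs s' hs' hxx
      refine ⟨s'', hs'', hsx, ?_, ?_⟩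
      · intro i
        have hmem : ystar i ∈ Set.range y \ (Set.range x ∪ Set.range z) := by
          rw [← hy]; exact ⟨i, rfl⟩
        obtain ⟨⟨j, hj⟩, -⟩ := hmem
        rw [← hj]; exact hsy j
      · intro i
        have hmem : zstar i ∈ Set.range z \ (Set.range x ∪ Set.range y) := by
          rw [← hz]; exact ⟨i, rfl⟩
        obtain ⟨⟨j, hj⟩, -⟩ := hmem
        rw [← hj]; exact hsz j
    · intro i s hs s' hs' hxx
      have hmem : u i ∈ (Set.range y ∩ Set.range z) \ Set.range x := by
        rw [← hu]; exact ⟨i, rfl⟩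
      obtain ⟨⟨⟨j, hj⟩, ⟨l, hl⟩⟩, -⟩ := hmem
      obtain ⟨s'', hs'', hsx, hsy, hsz⟩ := h s hs s' hs' hxx
      calc s (u i) = s'' (u i) := by rw [← hj]; exact (hsy j).symm
        _ = s' (u i) := by rw [← hl]; exact hsz l
  · rintro ⟨hind, hdep⟩ s hs s' hs' hxx
    obtain ⟨s'', hs'', hsx, hsy, hsz⟩ := hind s hs s' hs' hxx
    refine ⟨s'', hs'', hsx, ?_, ?_⟩
    · intro j
      by_cases hjx : y j ∈ Set.range x
      · obtain ⟨i, hi⟩ := hjx; rw [← hi, hsx i]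
      · by_cases hjz : y j ∈ Set.range z
        · have hmem : y j ∈ Set.range u := by
            rw [hu]; exact ⟨⟨⟨j, rfl⟩, hjz⟩, hjx⟩
          obtain ⟨i, hi⟩ := hmem
          have := hdep i s'' hs'' s hs (fun a => by rw [hsx a])
          rw [← hi]; exact this
        · have hmem : y j ∈ Set.range ystar := by
            rw [hy]; exact ⟨⟨j, rfl⟩, fun h => h.elim hjx hjz⟩
          obtain ⟨i, hi⟩ := hmem
          rw [← hi]; exact hsy i
    · intro l
      by_cases hlx : z l ∈ Set.range x
      · obtain ⟨i, hi⟩ := hlx; rw [← hi, hsx i, hxx i]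
      · by_cases hly : z l ∈ Set.range y
        · have hmem : z l ∈ Set.range u := by
            rw [hu]; exact ⟨⟨hly, ⟨l, rfl⟩⟩, hlx⟩
          obtain ⟨i, hi⟩ := hmem
          have := hdep i s'' hs'' s' hs' (fun a => by rw [hsx a, hxx a])
          rw [← hi]; exact this
        · have hmem : z l ∈ Set.range zstar := by
            rw [hz]; exact ⟨⟨l, rfl⟩, fun h => h.elim hlx hly⟩
          obtain ⟨i, hi⟩ := hmem
          rw [← hi]; exact hsz i
end

section
/- From the labeled-graph construction of a team: let G = (V, E) be a labeled graph as in the chase characterization, and for each vertex u define the assignment s_u on variable x by s_u(x) = the family, indexed by variables y, of sets { w ∈ V : u ∼_{xy} w }. Then s_u(x) = s_w(y) if and only if u ∼_{xy} w. -/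
/-- ab-connectivity in a graph with edges labeled by pairs of variables. -/
def Conn {V Var : Type*} (E : V → V → Var → Var → Prop) (u : V) (a b : Var) (w : V) : Prop :=
  (u = w ∧ a = b) ∨
    ∃ (n : ℕ) (v : ℕ → V) (x : ℕ → Var),
      E u (v 0) a (x 0) ∧ (∀ i < n, E (v i) (v (i + 1)) (x i) (x (i + 1))) ∧
        E (v n) w (x n) b

/-! `u ∼_{ab} w` is reachability from `(u, a)` to `(w, b)` in the graph on `V × Var` whose
edges are the labeled edges of `E`, so for symmetric `E` it is an equivalence relation on
vertex–variable pairs; `s_u(x)` records the class of `(u, x)`, and two classes agree iff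
they are the same class. -/

namespace Conn

variable {V Var : Type*} {E : V → V → Var → Var → Prop}

def PairAdj (E : V → V → Var → Var → Prop) (p q : V × Var) : Prop :=
  E p.1 q.1 p.2 q.2

theorem reflTransGen_pairAdj {u w : V} {a b : Var} (h : Conn E u a b w) :
    Relation.ReflTransGen (PairAdj E) (u, a) (w, b) := by
  rcases h with ⟨rfl, rfl⟩ | ⟨n, v, x, h_first, h_mid, h_last⟩
  · exact .refl
  · have h_prefix : ∀ i ≤ n, Relation.ReflTransGen (PairAdj E) (u, a) (v i, x i) := by
      intro i
      induction i with
      | zero => exact fun _ => .single h_first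
      | succ i ih => exact fun hi => (ih (by omega)).tail (h_mid i (by omega))
    exact (h_prefix n le_rfl).tail h_last

variable (hE : ∀ u w a b, E u w a b → E w u b a)
include hE

/-- A single edge is a path `u, w, u, w` of length three, going back and forth. -/
theorem of_edge {u w : V} {a b : Var} (h : E u w a b) : Conn E u a b w :=
  Or.inr ⟨1, fun | 0 => w | _ => u, fun | 0 => b | _ => a, h,
    fun | 0, _ => hE _ _ _ _ h, h⟩

theorem cons {u v w : V} {a b c : Var} (h : E u v a c) (hvw : Conn E v c b w) :
    Conn E u a b w := by
  rcases hvw with ⟨rfl, rfl⟩ | ⟨n, vs, xs, h_first, h_mid, h_last⟩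
  · exact of_edge hE h
  · refine Or.inr ⟨n + 1, fun | 0 => v | i + 1 => vs i, fun | 0 => c | i + 1 => xs i,
      h, ?_, h_last⟩
    rintro (_ | i) hi
    · exact h_first
    · exact h_mid i (by omega)

theorem of_reflTransGen_pairAdj {p q : V × Var} (h : Relation.ReflTransGen (PairAdj E) p q) :
    Conn E p.1 p.2 q.2 q.1 := by
  induction h using Relation.ReflTransGen.head_induction_on with
  | refl => exact Or.inl ⟨rfl, rfl⟩
  | head h_edge _ ih => exact cons hE h_edge ih

theorem iff_reflTransGen_pairAdj {u w : V} {a b : Var} :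
    Conn E u a b w ↔ Relation.ReflTransGen (PairAdj E) (u, a) (w, b) :=
  ⟨reflTransGen_pairAdj, of_reflTransGen_pairAdj hE⟩

end Conn

theorem graph_team_values_general {V Var : Type*}
    (E : V → V → Var → Var → Prop) (hE : ∀ u w a b, E u w a b → E w u b a)
    (s : V → Var → (Var → Set V))
    (hs : ∀ u x, s u x = fun y => {w | Conn E u x y w}) (u w : V) (x y : Var) :
    s u x = s w y ↔ Conn E u x y w := by
  have : Std.Symm (Conn.PairAdj E) := ⟨fun _ _ h => hE _ _ _ _ h⟩
  simp only [hs, funext_iff, Set.ext_iff, Set.mem_ofPred_eq, Conn.iff_reflTransGen_pairAdj hE]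
  exact ⟨fun h => (h y w).2 .refl, fun h z v => ⟨(Std.Symm.symm _ _ h).trans, h.trans⟩⟩

/-- The team constructed from a labeled graph: the assignment of vertex u maps
variable x to the family (indexed by variables y) of the sets
{ w : u ∼_{xy} w }.  Then s_u(x) = s_w(y) iff u ∼_{xy} w. -/
theorem graph_team_values {V Var : Type*} [Fintype Var]
    (E : V → V → Var → Var → Prop) (hE : ∀ u w a b, E u w a b → E w u b a)
    (s : V → Var → (Var → Set V))
    (hs : ∀ u x, s u x = fun y => {w | Conn E u x y w}) (u w : V) (x y : Var) :
    s u x = s w y ↔ Conn E u x y w :=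
  graph_team_values_general E hE s hs u w x y
end
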